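/- arXiv:2509.22376 — 2 statements merged into one kernel-verified Lean document; each statement's English description precedes it below -/
import Mathlib

section
/- Suppose {A_ξ : ξ < κ} is an almost disjoint family of infinite subsets of ℕ, F ⊆ κ is countable, and S : ℓ∞^c(κ) → C(ℕ*) is an isometric embedding with S(1_{{ξ}}) = 1_{[A_ξ]} for all ξ < κ. Then for every ξ ∈ F, the clopen set [A_ξ] ⊆ ℕ* is contained in {x ∈ ℕ* : S(1_F)(x) = 1}, and for every ξ ∉ F, [A_ξ] is disjoint from {x ∈ ℕ* : S(1_F)(x) > 0}. -/
set_option synthInstance.maxHeartbeats 400000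
set_option maxHeartbeats 1000000

noncomputable section

open Set Filter
open scoped ENNReal

/-- `ℓ∞(κ)`: bounded real-valued functions on `κ` with the sup norm. -/
abbrev LinfK (κ : Type*) : Type _ := ↥(lp (fun _ : κ => ℝ) ∞)

/-- `ℓ∞^c(κ)`: the subspace of `ℓ∞(κ)` of countably supported functions. -/
def linfc (κ : Type*) : Submodule ℝ (LinfK κ) where
  carrier := {f | (Function.support (⇑f)).Countable}
  add_mem' := by
    intro f g hf hg
    refine Set.Countable.mono ?_ (hf.union hg)
    rw [lp.coeFn_add]
    exact Function.support_add _ _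
  zero_mem' := by
    simp [Function.support, lp.coeFn_zero]
  smul_mem' := by
    intro c f hf
    refine Set.Countable.mono ?_ hf
    rw [lp.coeFn_smul]
    exact Function.support_const_smul_subset c _

/-- The indicator function `1_F` of a countable `F ⊆ κ`, as an element of `ℓ∞^c(κ)`. -/
def indLinfc {κ : Type*} (F : Set κ) (hF : F.Countable) : ↥(linfc κ) :=
  ⟨⟨F.indicator (fun _ => (1 : ℝ)), memℓp_infty ⟨1, by
      rintro x ⟨i, rfl⟩
      by_cases h : i ∈ F
      · simp [Set.indicator_of_mem h]
      · simp [Set.indicator_of_notMem h]⟩⟩,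
    Set.Countable.mono (Set.support_indicator_subset) hF⟩

/-- The unit vector `1_{{ξ}}` of `ℓ∞^c(κ)`. -/
def unitVecC {κ : Type*} (ξ : κ) : ↥(linfc κ) :=
  indLinfc ({ξ} : Set κ) (Set.countable_singleton ξ)

/-- `ℕ* = βℕ \ ℕ`: the space of nonprincipal ultrafilters on `ℕ`. -/
def NStar : Type := {u : Ultrafilter ℕ // ∀ n : ℕ, u ≠ (pure n : Ultrafilter ℕ)}

instance : TopologicalSpace NStar := instTopologicalSpaceSubtype

/-- The clopen subset `[A] ⊆ ℕ*` determined by `A ⊆ ℕ`. -/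
def clopenOf (A : Set ℕ) : Set NStar := {u : NStar | A ∈ u.1}

theorem isClopen_clopenOf (A : Set ℕ) : IsClopen (clopenOf A) :=
  ⟨(ultrafilter_isClosed_basic A).preimage continuous_subtype_val,
   (ultrafilter_isOpen_basic A).preimage continuous_subtype_val⟩

/-- The characteristic function `1_{[A]} ∈ C(ℕ*)`. -/
def indBCF (A : Set ℕ) : BoundedContinuousFunction NStar ℝ :=
  BoundedContinuousFunction.indicator (clopenOf A) (isClopen_clopenOf A)

/-!
A contraction `S` into `C(ℕ*)` evaluated at a point `x` of `[A_ξ]` is a linear functional of norm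
at most one taking the value `1` at `1_{{ξ}}`. For `ξ ∈ F` the vector `1_F - 2 • 1_{{ξ}}` still
has norm at most one, so `|S(1_F)(x) - 2| ≤ 1` forces `S(1_F)(x) ≥ 1`; for `ξ ∉ F` the vector
`1_F + 1_{{ξ}}` has norm at most one, so `S(1_F)(x) + 1 ≤ 1`.
-/

section Contraction

variable {E X : Type*} [SeminormedAddCommGroup E] [NormedSpace ℝ E] [TopologicalSpace X]
  {S : E →ₗ[ℝ] BoundedContinuousFunction X ℝ} {e f : E} {x : X}

theorem abs_apply_le_of_norm_map_le (hS : ∀ v, ‖S v‖ ≤ ‖v‖) (v : E) (x : X) :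
    |S v x| ≤ ‖v‖ :=
  ((S v).norm_coe_le_norm x).trans (hS v)

theorem apply_eq_one_of_norm_sub_two_smul_le (hS : ∀ v, ‖S v‖ ≤ ‖v‖) (he : S e x = 1)
    (hf : ‖f‖ ≤ 1) (hfe : ‖f - (2 : ℝ) • e‖ ≤ 1) : S f x = 1 := by
  have hle := abs_le.1 ((abs_apply_le_of_norm_map_le hS f x).trans hf)
  have hge := abs_le.1 ((abs_apply_le_of_norm_map_le hS (f - (2 : ℝ) • e) x).trans hfe)
  simp only [map_sub, map_smul, BoundedContinuousFunction.coe_sub,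
    BoundedContinuousFunction.coe_smul, Pi.sub_apply, he, smul_eq_mul] at hge
  linarith [hle.2, hge.1]

theorem apply_nonpos_of_norm_add_le (hS : ∀ v, ‖S v‖ ≤ ‖v‖) (he : S e x = 1)
    (hfe : ‖f + e‖ ≤ 1) : S f x ≤ 0 := by
  have hle := abs_le.1 ((abs_apply_le_of_norm_map_le hS (f + e) x).trans hfe)
  simp only [map_add, BoundedContinuousFunction.coe_add, Pi.add_apply, he] at hle
  linarith [hle.2]

end Contraction

section Indicators

variable {κ : Type*}

theorem linfc_norm_le_of_forall_abs_le (h : ↥(linfc κ)) {C : ℝ} (hC : 0 ≤ C)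
    (hh : ∀ i, |(h : LinfK κ) i| ≤ C) : ‖h‖ ≤ C :=
  lp.norm_le_of_forall_le hC hh

theorem coe_indLinfc_apply (F : Set κ) (hF : F.Countable) (i : κ) :
    (indLinfc F hF : LinfK κ) i = F.indicator (fun _ => (1 : ℝ)) i :=
  rfl

theorem coe_unitVecC_apply (ξ i : κ) :
    (unitVecC ξ : LinfK κ) i = ({ξ} : Set κ).indicator (fun _ => (1 : ℝ)) i :=
  rfl

theorem norm_indLinfc_le_one (F : Set κ) (hF : F.Countable) : ‖indLinfc F hF‖ ≤ 1 := by
  refine linfc_norm_le_of_forall_abs_le _ zero_le_one fun i => ?_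
  rw [coe_indLinfc_apply]
  by_cases hi : i ∈ F <;> simp [hi]

theorem norm_indLinfc_sub_two_smul_unitVecC_le {F : Set κ} (hF : F.Countable) {ξ : κ}
    (hξ : ξ ∈ F) : ‖indLinfc F hF - (2 : ℝ) • unitVecC ξ‖ ≤ 1 := by
  refine linfc_norm_le_of_forall_abs_le _ zero_le_one fun i => ?_
  change |(indLinfc F hF : LinfK κ) i - 2 * (unitVecC ξ : LinfK κ) i| ≤ 1
  rw [coe_indLinfc_apply, coe_unitVecC_apply]
  rcases eq_or_ne i ξ with rfl | hne
  · norm_num [hξ]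
  · by_cases hi : i ∈ F <;> simp [hi, hne]

theorem norm_indLinfc_add_unitVecC_le {F : Set κ} (hF : F.Countable) {ξ : κ}
    (hξ : ξ ∉ F) : ‖indLinfc F hF + unitVecC ξ‖ ≤ 1 := by
  refine linfc_norm_le_of_forall_abs_le _ zero_le_one fun i => ?_
  change |(indLinfc F hF : LinfK κ) i + (unitVecC ξ : LinfK κ) i| ≤ 1
  rw [coe_indLinfc_apply, coe_unitVecC_apply]
  rcases eq_or_ne i ξ with rfl | hne
  · simp [hξ]
  · by_cases hi : i ∈ F <;> simp [hi, hne]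

end Indicators

theorem indBCF_apply_of_mem {A : Set ℕ} {x : NStar} (hx : x ∈ clopenOf A) : indBCF A x = 1 :=
  Set.indicator_of_mem hx 1

theorem stmt6_general {κ : Type*} (A : κ → Set ℕ)
    (F : Set κ) (hF : F.Countable)
    (S : ↥(linfc κ) →ₗᵢ[ℝ] BoundedContinuousFunction NStar ℝ)
    (hS : ∀ ξ, S (unitVecC ξ) = indBCF (A ξ)) :
    (∀ ξ ∈ F, ∀ x : NStar, x ∈ clopenOf (A ξ) → S (indLinfc F hF) x = 1) ∧
    (∀ ξ ∉ F, ∀ x : NStar, x ∈ clopenOf (A ξ) → ¬ (0 < S (indLinfc F hF) x)) := by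
  have hcontr : ∀ v, ‖S.toLinearMap v‖ ≤ ‖v‖ := fun v => (S.norm_map v).le
  have hunit : ∀ ξ x, x ∈ clopenOf (A ξ) → S.toLinearMap (unitVecC ξ) x = 1 := fun ξ x hx => by
    rw [LinearIsometry.coe_toLinearMap, hS, indBCF_apply_of_mem hx]
  constructor
  · intro ξ hξ x hx
    exact apply_eq_one_of_norm_sub_two_smul_le hcontr (hunit ξ x hx)
      (norm_indLinfc_le_one F hF) (norm_indLinfc_sub_two_smul_unitVecC_le hF hξ)
  · intro ξ hξ x hx
    exact not_lt.2 <| apply_nonpos_of_norm_add_le hcontr (hunit ξ x hx)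
      (norm_indLinfc_add_unitVecC_le hF hξ)

/-- with `S` and `{A_ξ}` as above and `F ⊆ κ` countable, for `ξ ∈ F` the
clopen set `[A_ξ]` is contained in `{x : S(1_F)(x) = 1}`, and for `ξ ∉ F` it is
disjoint from `{x : S(1_F)(x) > 0}`. -/
theorem stmt6 {κ : Type*} (A : κ → Set ℕ) (hinj : Function.Injective A)
    (hAinf : ∀ ξ, (A ξ).Infinite)
    (hAD : ∀ ξ η, ξ ≠ η → (A ξ ∩ A η).Finite)
    (F : Set κ) (hF : F.Countable)
    (S : ↥(linfc κ) →ₗᵢ[ℝ] BoundedContinuousFunction NStar ℝ)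
    (hS : ∀ ξ, S (unitVecC ξ) = indBCF (A ξ)) :
    (∀ ξ ∈ F, ∀ x : NStar, x ∈ clopenOf (A ξ) → S (indLinfc F hF) x = 1) ∧
    (∀ ξ ∉ F, ∀ x : NStar, x ∈ clopenOf (A ξ) → ¬ (0 < S (indLinfc F hF) x)) :=
  stmt6_general A F hF S hS
end
end

section
/- Let {A_ξ : ξ < ω₁} be an almost disjoint family of infinite subsets of ℕ and suppose there is a ⊆*-increasing sequence (V_α)_{α<ω₁} of subsets of ℕ such that A_ξ ⊆* V_α for ξ < α and A_ξ ∩ V_α finite for α ≤ ξ < ω₁. Then there exists a coherent family {s_α : α < ω₁} (s_α : ω·α → ω injective with s_α|_{ω·β} =* s_β for β < α) such that A_ξ =* s_{ξ+1}[[ω·ξ, ω·ξ + ω)] for every ξ < ω₁. -/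
noncomputable section

open Set
open scoped Ordinal

/-- The first uncountable ordinal `ω₁`. -/
def omega1 : Ordinal := (Cardinal.aleph 1).ord

/-- `{s_α : α < ω₁}` is a coherent family: each `s_α` is injective on `ω·α`
(the set of ordinals `< ω·α`) and `s_α` agrees with `s_β` on `ω·β` except at
finitely many points, for all `β < α < ω₁`. -/
def IsCoherentFamily (s : Ordinal → Ordinal → ℕ) : Prop :=
  ∀ α < omega1,
    Set.InjOn (s α) (Set.Iio (Ordinal.omega0 * α)) ∧
    ∀ β < α, {γ : Ordinal | γ < Ordinal.omega0 * β ∧ s α γ ≠ s β γ}.Finite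

/-- `A =* B`: the symmetric difference of `A, B ⊆ ℕ` is finite. -/
def EqStar (A B : Set ℕ) : Prop := ((A \ B) ∪ (B \ A)).Finite

/-!
The maps `s_α` are built by transfinite recursion, keeping the invariant that the values of `s_α`
lie almost inside `V_α`. Since `A_ξ ∩ V_ξ` is finite, almost all of `A_ξ` is then unused by `s_ξ`,
and `s_{ξ+1}` sends the new block `[ω·ξ, ω·ξ + ω)` bijectively onto those unused points.
At a limit `α < ω₁` take a cofinal sequence `c_k`: the maps `s_{c_k}` are glued block by block,
each time changing finitely many values to keep the result injective and inside `V_α`; fresh values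
are available because `V_α \ ran s_{c_k}` contains almost all of `A_{c_k}`.
-/

open Order

section AlmostEq

variable {ι β : Type*}

def AlmostEqOn (f g : ι → β) (D : Set ι) : Prop := {x ∈ D | f x ≠ g x}.Finite

variable {f g h : ι → β} {D E : Set ι}

theorem Set.EqOn.almostEqOn (hfg : EqOn f g D) : AlmostEqOn f g D :=
  finite_empty.subset fun _ ⟨hx, hne⟩ => hne (hfg hx)

namespace AlmostEqOn

theorem symm (hfg : AlmostEqOn f g D) : AlmostEqOn g f D := by
  simpa only [AlmostEqOn, ne_comm] using hfg

theorem trans (hfg : AlmostEqOn f g D) (hgh : AlmostEqOn g h D) : AlmostEqOn f h D :=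
  (hfg.union hgh).subset fun x ⟨hx, hne⟩ => by
    by_cases hfgx : f x = g x
    · exact Or.inr ⟨hx, hfgx ▸ hne⟩
    · exact Or.inl ⟨hx, hfgx⟩

theorem mono (hfg : AlmostEqOn f g D) (hED : E ⊆ D) : AlmostEqOn f g E :=
  hfg.subset fun _ ⟨hx, hne⟩ => ⟨hED hx, hne⟩

theorem finite_image_diff_image {G : ι → β} {D' : Set ι} (hGg : AlmostEqOn G g D)
    (hDD' : D ⊆ D') : (G '' D \ g '' D').Finite :=
  (hGg.image G).subset fun _ ⟨⟨x, hx, hxv⟩, hv⟩ =>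
    ⟨x, ⟨hx, fun h => hv ⟨x, hDD' hx, h ▸ hxv⟩⟩, hxv⟩

end AlmostEqOn

end AlmostEq

section Amalgamation

variable {ι : Type*}

theorem exists_injOn_extension {D D' : Set ι} {W : Set ℕ} {G g : ι → ℕ} (hDD' : D ⊆ D')
    (hg : InjOn g D') (hG : InjOn G D) (hGg : AlmostEqOn G g D) (hGW : MapsTo G D W)
    (hgW : (g '' D' \ W).Finite) (hW : (W \ g '' D').Infinite) :
    ∃ G' : ι → ℕ, InjOn G' D' ∧ EqOn G' G D ∧ AlmostEqOn G' g D' ∧ MapsTo G' D' W := by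
  classical
  -- the new points at which `g` cannot be kept; they are sent to `Fresh` instead
  set Bad := {x ∈ D' \ D | g x ∈ G '' D ∨ g x ∉ W}
  set Fresh := W \ (g '' D' ∪ G '' D)
  have hBad : Bad.Finite := by
    refine Finite.of_finite_image (((hGg.image G).union hgW).subset ?_)
      (hg.mono fun x hx => hx.1.1)
    rintro _ ⟨x, ⟨⟨hxD', hxD⟩, ⟨y, hy, hyx⟩ | hx⟩, rfl⟩
    · refine Or.inl ⟨y, ⟨hy, fun h => hxD ?_⟩, hyx⟩
      rwa [← hg (hDD' hy) hxD' (h.symm.trans hyx)]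
    · exact Or.inr ⟨⟨x, hxD', rfl⟩, hx⟩
  have hFresh : Fresh.Infinite := by
    refine (hW.sdiff (hGg.finite_image_diff_image hDD')).mono ?_
    rintro v ⟨⟨hvW, hvg⟩, hvG⟩
    exact ⟨hvW, fun hv => hv.elim hvg fun hv => hvG ⟨hv, hvg⟩⟩
  obtain ⟨ρ, hρ, hρinj⟩ :=
    hBad.exists_injOn_of_encard_le (t := Fresh) (by rw [hFresh.encard_eq]; exact le_top)
  refine ⟨D.piecewise G (Bad.piecewise ρ g), ?_, piecewise_eqOn _ _ _, ?_, ?_⟩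
  · have hFreshG {x y} (hx : x ∈ D) (hy : y ∈ Bad) : G x ≠ ρ y :=
      fun h => (hρ hy).2 (Or.inr ⟨x, hx, h⟩)
    have hFreshg {x y} (hx : x ∈ D') (hy : y ∈ Bad) : g x ≠ ρ y :=
      fun h => (hρ hy).2 (Or.inl ⟨x, hx, h⟩)
    have hGood {x y} (hx : x ∈ D) (hy : y ∈ D') (hyD : y ∉ D) (hyB : y ∉ Bad) : G x ≠ g y :=
      fun h => hyB ⟨⟨hy, hyD⟩, Or.inl ⟨x, hx, h⟩⟩
    intro x hx y hy hxy
    simp only [piecewise] at hxy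
    split_ifs at hxy with hxD hyD hyB hxB hyD hyB hyD hyB
    · exact hG hxD hyD hxy
    · exact absurd hxy (hFreshG hxD hyB)
    · exact absurd hxy (hGood hxD hy hyD hyB)
    · exact absurd hxy.symm (hFreshG hyD hxB)
    · exact hρinj hxB hyB hxy
    · exact absurd hxy.symm (hFreshg hy hxB)
    · exact absurd hxy.symm (hGood hyD hx hxD hxB)
    · exact absurd hxy (hFreshg hx hyB)
    · exact hg hx hy hxy
  · refine (hGg.union hBad).subset fun x ⟨hx, hne⟩ => ?_
    by_cases hxD : x ∈ D
    · exact Or.inl ⟨hxD, by rwa [piecewise_eq_of_mem _ _ _ hxD] at hne⟩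
    by_cases hxB : x ∈ Bad
    · exact Or.inr hxB
    · simp only [piecewise_eq_of_notMem _ _ _ hxD, piecewise_eq_of_notMem _ _ _ hxB] at hne
      exact absurd rfl hne
  · intro x hx
    by_cases hxD : x ∈ D
    · rw [piecewise_eq_of_mem _ _ _ hxD]; exact hGW hxD
    by_cases hxB : x ∈ Bad
    · rw [piecewise_eq_of_notMem _ _ _ hxD, piecewise_eq_of_mem _ _ _ hxB]; exact (hρ hxB).1
    · rw [piecewise_eq_of_notMem _ _ _ hxD, piecewise_eq_of_notMem _ _ _ hxB]
      by_contra hW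
      exact hxB ⟨⟨hx, hxD⟩, Or.inr hW⟩

theorem exists_eqOn_of_eqOn_succ {β : Type*} {D : ℕ → Set ι} (hD : Monotone D) (f : ℕ → ι → β)
    (hf : ∀ k, EqOn (f (k + 1)) (f k) (D k)) : ∃ F : ι → β, ∀ k, EqOn F (f k) (D k) := by
  have hle : ∀ k m, k ≤ m → EqOn (f m) (f k) (D k) := by
    intro k m hkm
    induction m, hkm using Nat.le_induction with
    | base => exact eqOn_refl _ _
    | succ m hkm ih => exact ((hf m).mono (hD hkm)).trans ih
  refine ⟨fun x => f (Classical.epsilon fun k => x ∈ D k) x, fun k x hx => ?_⟩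
  have hxj : x ∈ D (Classical.epsilon fun k => x ∈ D k) :=
    Classical.epsilon_spec (p := fun k => x ∈ D k) ⟨k, hx⟩
  exact (hle _ _ (le_max_left _ k) hxj).symm.trans (hle _ _ (le_max_right _ k) hx)

theorem exists_injOn_iUnion_almostEqOn {D : ℕ → Set ι} {g : ℕ → ι → ℕ} {W : Set ℕ}
    (hD : Monotone D) (hg : ∀ k, InjOn (g k) (D k))
    (hcoh : ∀ k, AlmostEqOn (g (k + 1)) (g k) (D k))
    (hgW : ∀ k, (g k '' D k \ W).Finite) (hW : ∀ k, (W \ g k '' D k).Infinite) :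
    ∃ G : ι → ℕ, InjOn G (⋃ k, D k) ∧ (∀ k, AlmostEqOn G (g k) (D k)) ∧
      MapsTo G (⋃ k, D k) W := by
  let Good (k : ℕ) (G : ι → ℕ) : Prop :=
    InjOn G (D k) ∧ AlmostEqOn G (g k) (D k) ∧ MapsTo G (D k) W
  have base : ∃ G, Good 0 G := by
    obtain ⟨G, hGinj, -, hGg, hGW⟩ := exists_injOn_extension (G := fun _ => 0) (empty_subset _)
      (hg 0) (injOn_empty _) (finite_empty.subset (sep_subset _ _)) (mapsTo_empty _ _)
      (hgW 0) (hW 0)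
    exact ⟨G, hGinj, hGg, hGW⟩
  have step : ∀ k G, Good k G → ∃ G', Good (k + 1) G' ∧ EqOn G' G (D k) := by
    rintro k G ⟨hGinj, hGg, hGW⟩
    obtain ⟨G', hG'inj, hG'G, hG'g, hG'W⟩ := exists_injOn_extension (hD k.le_succ) (hg (k + 1))
      hGinj (hGg.trans (hcoh k).symm) hGW (hgW _) (hW _)
    exact ⟨G', ⟨hG'inj, hG'g, hG'W⟩, hG'G⟩
  choose G₀ hG₀ using base
  choose next hnext hnext_eq using step
  let seq (k : ℕ) : {G // Good k G} :=
    Nat.rec ⟨G₀, hG₀⟩ (fun k G => ⟨next k G.1 G.2, hnext k G.1 G.2⟩) k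
  obtain ⟨G, hG⟩ := exists_eqOn_of_eqOn_succ hD (fun k => (seq k).1)
    fun k => hnext_eq k _ (seq k).2
  refine ⟨G, ?_, fun k => (hG k).almostEqOn.trans (seq k).2.2.1, ?_⟩
  · rintro x ⟨_, ⟨i, rfl⟩, hx⟩ y ⟨_, ⟨j, rfl⟩, hy⟩ hxy
    have hx' := hD (le_max_left i j) hx
    have hy' := hD (le_max_right i j) hy
    exact (seq (max i j)).2.1 hx' hy' ((hG _ hx').symm.trans (hxy.trans (hG _ hy')))
  · rintro x ⟨_, ⟨k, rfl⟩, hx⟩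
    rw [hG k hx]
    exact (seq k).2.2.2 hx

end Amalgamation

theorem WellFoundedLT.exists_recursive {ι X : Type*} [Preorder ι] [WellFoundedLT ι] [Nonempty X]
    (P : ι → (ι → X) → X → Prop)
    (hP : ∀ i s t, (∀ j < i, s j = t j) → ∀ x, P i s x → P i t x)
    (hstep : ∀ i s, (∀ j < i, P j s (s j)) → ∃ x, P i s x) :
    ∃ s : ι → X, ∀ i, P i s (s i) := by
  classical
  let restrict (i : ι) (s : ∀ j, j < i → X) (j : ι) : X :=
    if hj : j < i then s j hj else Classical.arbitrary X
  let s := wellFounded_lt.fix fun i rec => Classical.epsilon (P i (restrict i rec))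
  have hs (i : ι) : s i = Classical.epsilon (P i (restrict i fun j _ => s j)) :=
    wellFounded_lt.fix_eq _ i
  have hres (i : ι) : ∀ j < i, restrict i (fun j _ => s j) j = s j := fun j hj => dif_pos hj
  refine ⟨s, fun i => wellFounded_lt.induction (C := fun i => P i s (s i)) i fun i ih => ?_⟩
  obtain ⟨x, hx⟩ := hstep i s ih
  refine hP i _ s (hres i) _ ?_
  rw [hs i]
  exact Classical.epsilon_spec ⟨x, hP i s _ (fun j hj => (hres i j hj).symm) x hx⟩

theorem Order.IsSuccLimit.exists_monotone_cofinal {X : Type*} [LinearOrder X] [SuccOrder X]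
    {a : X} (ha : IsSuccLimit a) (hc : (Iio a).Countable) :
    ∃ c : ℕ → X, Monotone c ∧ (∀ n, c n < a) ∧ ∀ b < a, ∃ n, b < c n := by
  have : Countable (Iio a) := hc.to_subtype
  have : Nonempty (Iio a) := ha.nonempty_Iio.to_subtype
  obtain ⟨c, hmono, htends⟩ := Filter.exists_seq_monotone_tendsto_atTop_atTop (Iio a)
  refine ⟨fun n => c n, fun m n h => hmono h, fun n => (c n).2, fun b hb => ?_⟩
  obtain ⟨n, hn⟩ := (Filter.tendsto_atTop.1 htends ⟨succ b, ha.succ_lt hb⟩).exists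
  exact ⟨n, (lt_succ_of_not_isMax (not_isMax_of_lt hb)).trans_le hn⟩

theorem countable_Iio_of_lt_omega1 {α : Ordinal} (hα : α < omega1) : (Iio α).Countable := by
  rw [← Cardinal.le_aleph0_iff_set_countable, Cardinal.mk_Iio_ordinal, Cardinal.lift_le_aleph0,
    ← Cardinal.lt_aleph_one_iff, ← Cardinal.lt_ord]
  exact hα

theorem add_one_lt_omega1 {ξ : Ordinal} (hξ : ξ < omega1) : ξ + 1 < omega1 := by
  rw [← succ_eq_add_one]
  exact (Cardinal.isSuccLimit_ord (Cardinal.aleph0_le_aleph 1)).succ_lt hξ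

theorem exists_bijOn_Ico_add_omega0 (a : Ordinal) {S : Set ℕ} (hS : S.Infinite) :
    ∃ e : Ordinal → ℕ, BijOn e (Ico a (a + ω)) S := by
  have hblock : BijOn (fun n : ℕ => a + n) univ (Ico a (a + ω)) := by
    refine ⟨fun n _ => ⟨le_self_add, (add_lt_add_iff_left a).2 (Ordinal.natCast_lt_omega0 n)⟩,
      fun m _ n _ h => Nat.cast_injective (add_left_cancel h), fun γ ⟨hγa, hγ⟩ => ?_⟩
    rw [← Ordinal.add_sub_cancel_of_le hγa] at hγ ⊢
    obtain ⟨n, hn⟩ := Ordinal.lt_omega0.1 ((add_lt_add_iff_left a).1 hγ)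
    exact ⟨n, trivial, by rw [hn]⟩
  have hnth : BijOn (Nat.nth (· ∈ S)) univ S := by
    refine ⟨fun _ _ => Nat.nth_mem_of_infinite hS _, (Nat.nth_injective hS).injOn, ?_⟩
    rw [SurjOn, image_univ, Nat.range_nth_of_infinite (p := (· ∈ S)) hS]
    exact fun _ => id
  exact ⟨_, hnth.comp (BijOn.symm hblock.invOn_invFunOn.symm hblock)⟩

structure IsStage (A V : Ordinal → Set ℕ) (α : Ordinal) (s : Ordinal → Ordinal → ℕ)
    (f : Ordinal → ℕ) : Prop where
  injOn : InjOn f (Iio (ω * α))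
  almostEqOn : ∀ β < α, AlmostEqOn f (s β) (Iio (ω * β))
  finite_image_diff : (f '' Iio (ω * α) \ V α).Finite
  eqStar_block : ∀ ξ, α = ξ + 1 → EqStar (A ξ) (f '' Ico (ω * ξ) (ω * ξ + ω))

namespace IsStage

variable {A V : Ordinal → Set ℕ} {s : Ordinal → Ordinal → ℕ} {f : Ordinal → ℕ} {α ξ : Ordinal}

theorem congr {t : Ordinal → Ordinal → ℕ} (hst : ∀ β < α, s β = t β) (hf : IsStage A V α s f) :
    IsStage A V α t f :=
  ⟨hf.injOn, fun β hβ => hst β hβ ▸ hf.almostEqOn β hβ, hf.finite_image_diff, hf.eqStar_block⟩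

theorem zero : IsStage A V 0 s fun _ => 0 := by
  refine ⟨?_, fun β hβ => absurd hβ not_lt_bot, ?_, fun ξ h => absurd h.symm (by simp)⟩ <;> simp

theorem finite_inter_image (hf : IsStage A V ξ s f) (hAV : (A ξ ∩ V ξ).Finite) :
    (A ξ ∩ f '' Iio (ω * ξ)).Finite :=
  (hAV.union hf.finite_image_diff).subset fun x ⟨hA, hR⟩ => by
    by_cases hV : x ∈ V ξ
    exacts [Or.inl ⟨hA, hV⟩, Or.inr ⟨hR, hV⟩]

theorem exists_succ (hf : IsStage A V ξ s (s ξ)) (hA : (A ξ).Infinite) (hAV : (A ξ ∩ V ξ).Finite)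
    (hVV : (V ξ \ V (ξ + 1)).Finite) (hAV' : (A ξ \ V (ξ + 1)).Finite) :
    ∃ f, IsStage A V (ξ + 1) s f := by
  classical
  set R := s ξ '' Iio (ω * ξ)
  set B := Ico (ω * ξ) (ω * ξ + ω)
  have hAR : (A ξ ∩ R).Finite := hf.finite_inter_image hAV
  obtain ⟨e, he⟩ := exists_bijOn_Ico_add_omega0 (ω * ξ) (S := A ξ \ R)
    (by simpa only [sdiff_self_inter] using hA.sdiff hAR)
  have hdisj : Disjoint (Iio (ω * ξ)) B := disjoint_left.2 fun _ hx hy => not_le.2 hx hy.1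
  have hIio : Iio (ω * (ξ + 1)) = Iio (ω * ξ) ∪ B := by
    rw [mul_add_one, Iio_union_Ico_eq_Iio le_self_add]
  set f := (Iio (ω * ξ)).piecewise (s ξ) e
  have hfξ : EqOn f (s ξ) (Iio (ω * ξ)) := piecewise_eqOn _ _ _
  have hfB : EqOn f e B :=
    (piecewise_eqOn_compl _ _ _).mono fun _ hx => hdisj.notMem_of_mem_right hx
  have himB : f '' B = A ξ \ R := hfB.image_eq.trans he.image_eq
  refine ⟨f, ?_, fun β hβ => ?_, ?_, fun ξ' hξ' => ?_⟩
  · rw [hIio, injOn_union hdisj, hfξ.injOn_iff, hfB.injOn_iff]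
    refine ⟨hf.injOn, he.injOn, fun x hx y hy hxy => ?_⟩
    have hy' : f y ∈ A ξ \ R := himB ▸ mem_image_of_mem f hy
    exact hy'.2 ⟨x, hx, (hfξ hx).symm.trans hxy⟩
  · rcases (lt_succ_iff.1 ((succ_eq_add_one ξ).symm ▸ hβ)).lt_or_eq with hβ | rfl
    · exact (hfξ.mono (Iio_subset_Iio (mul_le_mul_right hβ.le _))).almostEqOn.trans
        (hf.almostEqOn β hβ)
    · exact hfξ.almostEqOn
  · rw [hIio, image_union, hfξ.image_eq, himB]
    refine ((hf.finite_image_diff.union hVV).union hAV').subset ?_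
    rintro x ⟨hx | hx, hxV⟩
    · exact Or.inl (sdiff_triangle _ (V ξ) _ ⟨hx, hxV⟩)
    · exact Or.inr ⟨hx.1, hxV⟩
  · obtain rfl := (add_one_inj.1 hξ').symm
    rw [himB, EqStar, Set.sdiff_sdiff_right_self, sdiff_eq_empty.2 sdiff_subset, union_empty]
    exact hAR

theorem exists_limit (hα : IsSuccLimit α) (hαc : (Iio α).Countable)
    (hs : ∀ β < α, IsStage A V β s (s β)) (hA : ∀ β < α, (A β).Infinite)
    (hAV : ∀ β < α, (A β ∩ V β).Finite) (hVV : ∀ β < α, (V β \ V α).Finite)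
    (hAV' : ∀ β < α, (A β \ V α).Finite) : ∃ f, IsStage A V α s f := by
  obtain ⟨c, hcmono, hcα, hcof⟩ := hα.exists_monotone_cofinal hαc
  have hU : ⋃ k, Iio (ω * c k) = Iio (ω * α) := by
    ext γ
    simp only [mem_iUnion, mem_Iio, Ordinal.lt_mul_iff_div_lt Ordinal.omega0_ne_zero]
    exact ⟨fun ⟨k, hk⟩ => hk.trans (hcα k), hcof _⟩
  have hcoh : ∀ k, AlmostEqOn (s (c (k + 1))) (s (c k)) (Iio (ω * c k)) := fun k => by
    rcases (hcmono k.le_succ).lt_or_eq with h | h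
    · exact (hs _ (hcα _)).almostEqOn _ h
    · simp only [← h]
      exact (eqOn_refl _ _).almostEqOn
  have hran : ∀ k, (s (c k) '' Iio (ω * c k) \ V α).Finite := fun k =>
    ((hs _ (hcα k)).finite_image_diff.union (hVV _ (hcα k))).subset (sdiff_triangle _ _ _)
  have hfresh : ∀ k, (V α \ s (c k) '' Iio (ω * c k)).Infinite := fun k =>
    (((hA _ (hcα k)).sdiff ((hs _ (hcα k)).finite_inter_image (hAV _ (hcα k)))).sdiff
      (hAV' _ (hcα k))).mono fun _ hx =>
        ⟨not_not.1 fun h => hx.2 ⟨hx.1.1, h⟩, fun h => hx.1.2 ⟨hx.1.1, h⟩⟩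
  obtain ⟨G, hGinj, hGs, hGW⟩ := exists_injOn_iUnion_almostEqOn
    (fun m n h => Iio_subset_Iio (mul_le_mul_right (hcmono h) _)) (fun k => (hs _ (hcα k)).injOn)
    hcoh hran hfresh
  rw [hU] at hGinj hGW
  refine ⟨G, hGinj, fun β hβ => ?_, ?_, fun ξ h => absurd h.symm ?_⟩
  · obtain ⟨n, hn⟩ := hcof β hβ
    exact ((hGs n).mono (Iio_subset_Iio (mul_le_mul_right hn.le _))).trans
      ((hs _ (hcα n)).almostEqOn β hn)
  · rw [sdiff_eq_empty.2 hGW.image_subset]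
    exact finite_empty
  · rw [← succ_eq_add_one]
    exact hα.succ_ne ξ

theorem exists_of_lt_omega1
    (hAinf : ∀ ξ < omega1, (A ξ).Infinite)
    (hVmono : ∀ α < omega1, ∀ β < omega1, α < β → (V α \ V β).Finite)
    (hV1 : ∀ ξ α : Ordinal, ξ < α → α < omega1 → (A ξ \ V α).Finite)
    (hV2 : ∀ α ξ : Ordinal, α ≤ ξ → ξ < omega1 → (A ξ ∩ V α).Finite)
    (hα : α < omega1)
    (hs : ∀ β < α, IsStage A V β s (s β)) : ∃ f, IsStage A V α s f := by
  rcases Ordinal.zero_or_succ_or_isSuccLimit α with rfl | ⟨ξ, rfl⟩ | hlim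
  · exact ⟨_, zero⟩
  · rw [succ_eq_add_one] at hα hs ⊢
    have hξ : ξ < ξ + 1 := lt_add_one ξ
    have hξω := hξ.trans hα
    exact (hs ξ hξ).exists_succ (hAinf ξ hξω) (hV2 ξ ξ le_rfl hξω) (hVmono ξ hξω _ hα hξ)
      (hV1 ξ _ hξ hα)
  · exact exists_limit hlim (countable_Iio_of_lt_omega1 hα) hs
      (fun β hβ => hAinf β (hβ.trans hα)) (fun β hβ => hV2 β β le_rfl (hβ.trans hα))
      (fun β hβ => hVmono β (hβ.trans hα) α hα hβ) (fun β hβ => hV1 β α hβ hα)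

end IsStage

theorem stmt11_general (A : Ordinal → Set ℕ)
    (hAinf : ∀ ξ < omega1, (A ξ).Infinite)
    (V : Ordinal → Set ℕ)
    (hVmono : ∀ α < omega1, ∀ β < omega1, α < β → (V α \ V β).Finite)
    (hV1 : ∀ ξ α : Ordinal, ξ < α → α < omega1 → (A ξ \ V α).Finite)
    (hV2 : ∀ α ξ : Ordinal, α ≤ ξ → ξ < omega1 → (A ξ ∩ V α).Finite) :
    ∃ s : Ordinal → Ordinal → ℕ, IsCoherentFamily s ∧
      ∀ ξ < omega1,
        EqStar (A ξ)
          (s (ξ + 1) '' Set.Ico (Ordinal.omega0 * ξ) (Ordinal.omega0 * ξ + Ordinal.omega0)) := by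
  obtain ⟨s, hs⟩ := WellFoundedLT.exists_recursive (fun α s f => α < omega1 → IsStage A V α s f)
    (fun α s t hst f hf hα => (hf hα).congr hst)
    (fun α s hs => by
      by_cases hα : α < omega1
      · obtain ⟨f, hf⟩ := IsStage.exists_of_lt_omega1 hAinf hVmono hV1 hV2 hα
          fun β hβ => hs β hβ (hβ.trans hα)
        exact ⟨f, fun _ => hf⟩
      · exact ⟨fun _ => 0, fun h => absurd h hα⟩)
  exact ⟨s, fun α hα => ⟨(hs α hα).injOn, (hs α hα).almostEqOn⟩,
    fun ξ hξ => (hs (ξ + 1) (add_one_lt_omega1 hξ)).eqStar_block ξ rfl⟩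

/-- if an almost disjoint family `{A_ξ : ξ < ω₁}` of infinite subsets of
`ℕ` admits a `⊆*`-increasing sequence `(V_α)` separating `{A_ξ : ξ < α}` from
`{A_ξ : ξ ≥ α}`, then there is a coherent family `{s_α}` with
`A_ξ =* s_{ξ+1}[[ω·ξ, ω·ξ+ω)]` for every `ξ < ω₁`. -/
theorem stmt11 (A : Ordinal → Set ℕ)
    (hAinf : ∀ ξ < omega1, (A ξ).Infinite)
    (hAD : ∀ ξ < omega1, ∀ η < omega1, ξ ≠ η → (A ξ ∩ A η).Finite)
    (V : Ordinal → Set ℕ)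
    (hVmono : ∀ α < omega1, ∀ β < omega1, α < β → (V α \ V β).Finite)
    (hV1 : ∀ ξ α : Ordinal, ξ < α → α < omega1 → (A ξ \ V α).Finite)
    (hV2 : ∀ α ξ : Ordinal, α ≤ ξ → ξ < omega1 → (A ξ ∩ V α).Finite) :
    ∃ s : Ordinal → Ordinal → ℕ, IsCoherentFamily s ∧
      ∀ ξ < omega1,
        EqStar (A ξ)
          (s (ξ + 1) '' Set.Ico (Ordinal.omega0 * ξ) (Ordinal.omega0 * ξ + Ordinal.omega0)) :=
  stmt11_general A hAinf V hVmono hV1 hV2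
end
end
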